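/- Extremal entropy for rainbow-triangle-free 3-colourings: Let P = (P_n) where P_n is the set of 3-colourings of K_n containing no rainbow triangle. Then for all n ≥ 3, ex(n,P) = log₃2 · C(n,2). Moreover, a 3-colouring template t for K_n with ⟨t⟩ ⊆ P_n satisfies Ent(t) = log₃2 · C(n,2) if and only if there exist two distinct colours c₁, c₂ ∈ {1,2,3} with t(e) = {c₁,c₂} for every edge e of K_n. -/

import Mathlib

open Filter

abbrev Edge (n : ℕ) := {p : Fin n × Fin n // p.1 < p.2}

abbrev Colouring (k n : ℕ) := Edge n → Fin k

abbrev Template (k n : ℕ) := Edge n → Finset (Fin k)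

def Proper {k n : ℕ} (t : Template k n) : Prop := ∀ e, (t e).Nonempty

def Realises {k n : ℕ} (c : Colouring k n) (t : Template k n) : Prop := ∀ e, c e ∈ t e

noncomputable def Ent {k n : ℕ} (t : Template k n) : ℝ :=
  ∑ e : Edge n, Real.logb k ((t e).card)

def Edge.map {m n : ℕ} (φ : Fin m → Fin n) (h : StrictMono φ) (e : Edge m) : Edge n :=
  ⟨(φ e.1.1, φ e.1.2), h e.2⟩

def restrictC {k m n : ℕ} (c : Colouring k n) (φ : Fin m → Fin n) (h : StrictMono φ) :
    Colouring k m := fun e => c (Edge.map φ h e)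

def restrictT {k m n : ℕ} (t : Template k n) (φ : Fin m → Fin n) (h : StrictMono φ) :
    Template k m := fun e => t (Edge.map φ h e)

def Forb {k N : ℕ} (F : Set (Colouring k N)) (n : ℕ) : Set (Colouring k n) :=
  {c | ∀ (φ : Fin N → Fin n) (h : StrictMono φ), restrictC c φ h ∉ F}

def OrderHereditary {k : ℕ} (P : ∀ n, Set (Colouring k n)) : Prop :=
  ∀ (m n : ℕ) (φ : Fin m → Fin n) (h : StrictMono φ) (c : Colouring k n),
    c ∈ P n → restrictC c φ h ∈ P m

noncomputable def exEnt {k n : ℕ} (A : Set (Colouring k n)) : ℝ :=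
  sSup {x | ∃ t : Template k n, Proper t ∧ (∀ c, Realises c t → c ∈ A) ∧ Ent t = x}

noncomputable def badPairs {k N n : ℕ} (t : Template k n) (F : Set (Colouring k N)) : ℕ :=
  Set.ncard {p : (Fin N → Fin n) × Colouring k N |
    ∃ h : StrictMono p.1, p.2 ∈ F ∧ Realises p.2 (restrictT t p.1 h)}

def TemplateLE {k m n : ℕ} (t : Template k m) (t' : Template k n) : Prop :=
  ∃ (φ : Fin m → Fin n) (h : StrictMono φ), ∀ e, t e ⊆ restrictT t' φ h e

def IsContainerFamily {k n : ℕ} (T : Finset (Template k n)) (A : Set (Colouring k n)) : Prop :=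
  ∀ t : Template k n, Proper t → (∀ c, Realises c t → c ∈ A) → ∃ t' ∈ T, TemplateLE t t'

/-- The 3-colouring `c` of `E(K_n)` contains no rainbow triangle: for every triple
`x < y < z`, the three edge colours are not pairwise distinct. -/
def RainbowFree {n : ℕ} (c : Colouring 3 n) : Prop :=
  ∀ (x y z : Fin n) (hxy : x < y) (hyz : y < z),
    c ⟨(x, y), hxy⟩ = c ⟨(y, z), hyz⟩ ∨
    c ⟨(y, z), hyz⟩ = c ⟨(x, z), hxy.trans hyz⟩ ∨
    c ⟨(x, y), hxy⟩ = c ⟨(x, z), hxy.trans hyz⟩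

/-! If every realisation of `t` is rainbow-free, then on every triangle no choice of one colour
from each of the three lists is rainbow. Hence two edges sharing a vertex carry at most four
colours between them, and three lists of size two on a triangle coincide. An edge with all three
colours thus forces its neighbours down to one colour, so full edges are pairwise disjoint and a
fixed choice of an adjacent edge for each of them is injective: there are at least as many
single-colour edges as full ones. A full edge and a single-colour edge together contribute
`1 + 0 < 2 log₃ 2` to `Ent t`, so `Ent t ≤ log₃ 2 · C(n, 2)`, with equality only if every list has
size two; the triangle condition then makes all lists equal. -/

open Finset

def NoRainbowTransversal (A B C : Finset (Fin 3)) : Prop :=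
  ∀ a ∈ A, ∀ b ∈ B, ∀ c ∈ C, a = b ∨ b = c ∨ a = c

instance (A B C : Finset (Fin 3)) : Decidable (NoRainbowTransversal A B C) := by
  unfold NoRainbowTransversal; infer_instance

namespace NoRainbowTransversal

variable {A B C : Finset (Fin 3)}

lemma rotate (h : NoRainbowTransversal A B C) : NoRainbowTransversal B C A := by
  intro b hb c hc a ha
  have := h a ha b hb c hc
  tauto

lemma card_add_card_le_four (h : NoRainbowTransversal A B C) (hC : C.Nonempty) :
    A.card + B.card ≤ 4 := by
  revert A B C
  decide

lemma eq_of_card_eq_two (h : NoRainbowTransversal A B C) (hA : A.card = 2) (hB : B.card = 2)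
    (hC : C.card = 2) : A = B := by
  revert A B C
  decide

end NoRainbowTransversal

def Edge.Meets {n : ℕ} (e e' : Edge n) : Prop :=
  e.1.1 = e'.1.1 ∨ e.1.1 = e'.1.2 ∨ e.1.2 = e'.1.1 ∨ e.1.2 = e'.1.2

section Template

variable {n : ℕ} {t : Template 3 n}

lemma Realises.update {c : Colouring 3 n} (hc : Realises c t) {e : Edge n} {a : Fin 3}
    (ha : a ∈ t e) : Realises (Function.update c e a) t := by
  intro e'
  rcases eq_or_ne e' e with rfl | h
  · simpa using ha
  · simpa [h] using hc e'

lemma noRainbowTransversal_of_lt (hp : Proper t) (hr : ∀ c, Realises c t → RainbowFree c)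
    {x y z : Fin n} (hxy : x < y) (hyz : y < z) :
    NoRainbowTransversal (t ⟨(x, y), hxy⟩) (t ⟨(y, z), hyz⟩) (t ⟨(x, z), hxy.trans hyz⟩) := by
  intro a ha b hb c hc
  have hxy_yz : (⟨(x, y), hxy⟩ : Edge n) ≠ ⟨(y, z), hyz⟩ := fun h => hxy.ne (congrArg (·.1.1) h)
  have hxy_xz : (⟨(x, y), hxy⟩ : Edge n) ≠ ⟨(x, z), hxy.trans hyz⟩ :=
    fun h => hyz.ne (congrArg (·.1.2) h)
  have hyz_xz : (⟨(y, z), hyz⟩ : Edge n) ≠ ⟨(x, z), hxy.trans hyz⟩ :=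
    fun h => hxy.ne' (congrArg (·.1.1) h)
  have hc₀ : Realises (fun e => (hp e).choose) t := fun e => (hp e).choose_spec
  simpa [Function.update_apply, hxy_yz, hxy_xz, hyz_xz, hxy_yz.symm, hxy_xz.symm, hyz_xz.symm]
    using hr _ (((hc₀.update hc).update hb).update ha) x y z hxy hyz

lemma card_add_card_le_four (hp : Proper t) (hr : ∀ c, Realises c t → RainbowFree c)
    {e e' : Edge n} (hne : e ≠ e') (hm : e.Meets e') : (t e).card + (t e').card ≤ 4 := by
  obtain ⟨⟨a, b⟩, hab⟩ := e
  obtain ⟨⟨u, v⟩, huv⟩ := e'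
  simp only [Edge.Meets] at hm
  rcases hm with rfl | rfl | rfl | rfl
  · rcases lt_or_gt_of_ne (fun h : b = v => hne (by subst h; rfl)) with hbv | hvb
    · rw [add_comm]
      exact (noRainbowTransversal_of_lt hp hr hab hbv).rotate.rotate.card_add_card_le_four (hp _)
    · exact (noRainbowTransversal_of_lt hp hr huv hvb).rotate.rotate.card_add_card_le_four (hp _)
  · rw [add_comm]
    exact (noRainbowTransversal_of_lt hp hr huv hab).card_add_card_le_four (hp _)
  · exact (noRainbowTransversal_of_lt hp hr hab huv).card_add_card_le_four (hp _)
  · rcases lt_or_gt_of_ne (fun h : a = u => hne (by subst h; rfl)) with hau | hua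
    · rw [add_comm]
      exact (noRainbowTransversal_of_lt hp hr hau huv).rotate.card_add_card_le_four (hp _)
    · exact (noRainbowTransversal_of_lt hp hr hua hab).rotate.card_add_card_le_four (hp _)

lemma triangle_eq_of_card_eq_two (hp : Proper t) (hr : ∀ c, Realises c t → RainbowFree c)
    (h2 : ∀ e, (t e).card = 2) {x y z : Fin n} (hxy : x < y) (hyz : y < z) :
    t ⟨(x, y), hxy⟩ = t ⟨(x, z), hxy.trans hyz⟩ ∧ t ⟨(y, z), hyz⟩ = t ⟨(x, z), hxy.trans hyz⟩ :=
  have h := noRainbowTransversal_of_lt hp hr hxy hyz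
  ⟨(h.rotate.rotate.eq_of_card_eq_two (h2 _) (h2 _) (h2 _)).symm,
    h.rotate.eq_of_card_eq_two (h2 _) (h2 _) (h2 _)⟩

lemma eq_of_forall_card_eq_two (hp : Proper t) (hr : ∀ c, Realises c t → RainbowFree c)
    (h2 : ∀ e, (t e).card = 2) (e e' : Edge n) : t e = t e' := by
  obtain ⟨m, rfl⟩ : ∃ m, n = m + 2 := ⟨n - 2, by have := e.2; have := e.1.2.isLt; omega⟩
  suffices h : ∀ e : Edge (m + 2), t e = t ⟨(0, 1), Fin.zero_lt_one⟩ from (h e).trans (h e').symm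
  have from_zero (b : Fin (m + 2)) (hb : 0 < b) : t ⟨(0, b), hb⟩ = t ⟨(0, 1), Fin.zero_lt_one⟩ := by
    rcases (Fin.one_le_of_ne_zero hb.ne').eq_or_lt with h1b | h1b
    · simp_rw [← h1b]
    · exact (triangle_eq_of_card_eq_two hp hr h2 Fin.zero_lt_one h1b).1.symm
  rintro ⟨⟨a, b⟩, hab⟩
  rcases (Fin.zero_le a).eq_or_lt with rfl | ha
  · exact from_zero b hab
  · exact (triangle_eq_of_card_eq_two hp hr h2 ha hab).2.trans (from_zero b _)

end Template

def Edge.partner {m : ℕ} (e : Edge (m + 3)) : Edge (m + 3) :=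
  if h₀ : e.1.1 = 0 then
    if h₁ : e.1.2 = 1 then ⟨(1, 2), by grind [Fin.lt_def, Fin.val_one, Fin.val_two]⟩
    else ⟨(1, e.1.2), by grind [Fin.lt_def, Fin.val_one]⟩
  else ⟨(0, e.1.2), by grind [Fin.lt_def]⟩

namespace Edge

variable {m : ℕ}

lemma partner_ne (e : Edge (m + 3)) : e.partner ≠ e := by
  unfold partner
  split_ifs <;> grind [Fin.lt_def, Fin.val_one]

lemma meets_partner (e : Edge (m + 3)) : e.Meets e.partner := by
  unfold partner Meets
  split_ifs <;> grind

lemma meets_of_partner_eq {e e' : Edge (m + 3)} (h : e.partner = e'.partner) : e.Meets e' := by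
  unfold partner Meets at *
  split_ifs at h <;> grind [Fin.lt_def, Fin.val_one, Fin.val_two]

end Edge

lemma card_full_le_card_single {m : ℕ} {t : Template 3 (m + 3)} (hp : Proper t)
    (hr : ∀ c, Realises c t → RainbowFree c) :
    #{e | (t e).card = 3} ≤ #{e | (t e).card = 1} := by
  refine card_le_card_of_injOn Edge.partner (fun e he => ?_) (fun e he e' he' h => ?_)
  · simp only [coe_filter, mem_univ, true_and, Set.mem_ofPred_eq] at he ⊢
    have := card_add_card_le_four hp hr e.partner_ne.symm e.meets_partner
    have := (hp e.partner).card_pos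
    omega
  · simp only [coe_filter, mem_univ, true_and, Set.mem_ofPred_eq] at he he'
    by_contra hne
    have := card_add_card_le_four hp hr hne (Edge.meets_of_partner_eq h)
    omega

section Counting

variable {n : ℕ}

lemma card_edge (n : ℕ) : Fintype.card (Edge n) = n.choose 2 := by
  rw [Fintype.card_subtype, Fintype.card_product_filter_lt, Fintype.card_fin]

lemma one_lt_two_mul_logb_three_two : 1 < 2 * Real.logb 3 2 := by
  have h4 : Real.logb 3 4 = 2 * Real.logb 3 2 := by
    rw [show (4 : ℝ) = 2 ^ 2 by norm_num, Real.logb_pow, Nat.cast_ofNat]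
  rw [← h4, ← Real.logb_self_eq_one (b := 3) (by norm_num)]
  exact Real.logb_lt_logb (by norm_num) (by norm_num) (by norm_num)

lemma logb_three_two_lt_one : Real.logb 3 2 < 1 := by
  rw [← Real.logb_self_eq_one (b := 3) (by norm_num)]
  exact Real.logb_lt_logb (by norm_num) (by norm_num) (by norm_num)

lemma ent_eq (t : Template 3 n) :
    Ent t = #{e | (t e).card = 3} + Real.logb 3 2 * #{e | (t e).card = 2} := by
  rw [Ent, natCast_card_filter, natCast_card_filter, mul_sum, ← sum_add_distrib]
  refine sum_congr rfl fun e _ => ?_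
  have := (t e).card_le_univ
  rw [Fintype.card_fin] at this
  interval_cases (t e).card <;> norm_num

lemma choose_two_eq (t : Template 3 n) (hp : Proper t) :
    (n.choose 2 : ℝ) = #{e | (t e).card = 1} + #{e | (t e).card = 2} + #{e | (t e).card = 3} := by
  rw [← card_edge, ← card_univ, card_eq_sum_ones, Nat.cast_sum, natCast_card_filter,
    natCast_card_filter, natCast_card_filter, ← sum_add_distrib, ← sum_add_distrib]
  refine sum_congr rfl fun e _ => ?_
  have := (hp e).card_pos
  have := (t e).card_le_univ
  rw [Fintype.card_fin] at this
  interval_cases (t e).card <;> norm_num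

lemma ent_le_of_card_le {t : Template 3 n} (hp : Proper t)
    (hcard : #{e | (t e).card = 3} ≤ #{e | (t e).card = 1}) :
    Ent t ≤ Real.logb 3 2 * n.choose 2 ∧
      (Ent t = Real.logb 3 2 * n.choose 2 → ∀ e, (t e).card = 2) := by
  rw [ent_eq, choose_two_eq t hp]
  have hfs : (#{e | (t e).card = 3} : ℝ) ≤ #{e | (t e).card = 1} := by exact_mod_cast hcard
  have hf : (0 : ℝ) ≤ #{e | (t e).card = 3} := Nat.cast_nonneg _
  have hc := one_lt_two_mul_logb_three_two
  have hc' := logb_three_two_lt_one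
  refine ⟨by nlinarith, fun h => ?_⟩
  have hs : (#{e | (t e).card = 1} : ℝ) = 0 := by nlinarith
  have hd : #{e | (t e).card = 2} = #(univ : Finset (Edge n)) := by
    have : (#{e | (t e).card = 2} : ℝ) = n.choose 2 := by
      rw [choose_two_eq t hp]
      nlinarith
    rw [card_univ, card_edge]
    exact_mod_cast this
  exact fun e => card_filter_eq_iff.1 hd e (mem_univ e)

end Counting

section TwoColours

variable {n : ℕ} {t : Template 3 n} {c₁ c₂ : Fin 3}

lemma rainbowFree_of_forall_eq_pair (ht : ∀ e, t e = {c₁, c₂}) (c : Colouring 3 n)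
    (hc : Realises c t) : RainbowFree c := by
  intro x y z hxy hyz
  have h₁ := hc ⟨(x, y), hxy⟩
  have h₂ := hc ⟨(y, z), hyz⟩
  have h₃ := hc ⟨(x, z), hxy.trans hyz⟩
  simp only [ht, mem_insert, mem_singleton] at h₁ h₂ h₃
  grind

lemma ent_of_forall_eq_pair (hne : c₁ ≠ c₂) (ht : ∀ e, t e = {c₁, c₂}) :
    Ent t = Real.logb 3 2 * n.choose 2 := by
  simp [ent_eq, ht, card_pair hne, card_edge]

end TwoColours

/-- Extremal entropy for rainbow-triangle-free 3-colourings (Theorem 4.13), together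
with the characterisation of the extremal templates. -/
theorem rainbow_free_extremal_entropy (n : ℕ) (hn : 3 ≤ n) :
    exEnt {c : Colouring 3 n | RainbowFree c} = Real.logb 3 2 * (n.choose 2 : ℝ) ∧
    ∀ t : Template 3 n, Proper t → (∀ c, Realises c t → RainbowFree c) →
      (Ent t = Real.logb 3 2 * (n.choose 2 : ℝ) ↔
        ∃ c₁ c₂ : Fin 3, c₁ ≠ c₂ ∧ ∀ e : Edge n, t e = {c₁, c₂}) := by
  obtain ⟨m, rfl⟩ := Nat.exists_eq_add_of_le' hn
  have upper {t : Template 3 (m + 3)} (hp : Proper t) (hr : ∀ c, Realises c t → RainbowFree c) :=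
    ent_le_of_card_le hp (card_full_le_card_single hp hr)
  refine ⟨IsGreatest.csSup_eq ⟨?_, ?_⟩, fun t hp hr => ⟨fun h => ?_, ?_⟩⟩
  · exact ⟨fun _ => {0, 1}, fun _ => ⟨0, by simp⟩, rainbowFree_of_forall_eq_pair fun _ => rfl,
      ent_of_forall_eq_pair (by decide) fun _ => rfl⟩
  · rintro _ ⟨t, hp, hr, rfl⟩
    exact (upper hp hr).1
  · have h2 := (upper hp hr).2 h
    let e₀ : Edge (m + 3) := ⟨(0, 1), Fin.zero_lt_one⟩
    obtain ⟨c₁, c₂, hne, he₀⟩ := card_eq_two.1 (h2 e₀)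
    exact ⟨c₁, c₂, hne, fun e => (eq_of_forall_card_eq_two hp hr h2 e e₀).trans he₀⟩
  · rintro ⟨c₁, c₂, hne, ht⟩
    exact ent_of_forall_eq_pair hne ht
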